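/- Let Ω ⊂ ℝ^{1+n} be a bounded open set and let a = (a_{jk}) be a matrix field with compactly supported C¹ entries on ℝ^{1+n} such that a_{jk} = −a_{kj} and Σⱼ ∂ⱼa_{jk} = 0 for all k. Then for all functions u₁, u₂ harmonic on ℝ^{1+n}, Σ_{j,k} ∫ a_{jk}(x) ∂ⱼu₁(x) ∂_k u₂(x) dx = 0. -/

import Mathlib

/-!
Integrate by parts in the `k`-th variable, moving `∂ₖ` from `u₂` onto `aⱼₖ ∂ⱼu₁`. By the product
rule, `∑ⱼₖ ∂ₖ(aⱼₖ ∂ⱼu₁) = ∑ⱼ (∑ₖ ∂ₖaⱼₖ) ∂ⱼu₁ + ∑ⱼₖ aⱼₖ ∂ₖ∂ⱼu₁`. The first sum vanishes because,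
by antisymmetry, `∑ₖ ∂ₖaⱼₖ = -∑ₖ ∂ₖaₖⱼ = 0`; the second pairs the antisymmetric matrix `a` with
the symmetric Hessian of `u₁`.
-/

open MeasureTheory

/-- Partial derivative in the `j`-th coordinate direction. -/
noncomputable def pd {m : ℕ} {E : Type*} [NormedAddCommGroup E] [NormedSpace ℝ E]
    (j : Fin m) (f : (Fin m → ℝ) → E) (x : Fin m → ℝ) : E :=
  fderiv ℝ f x (Pi.single j 1)

/-- A function is harmonic on all of `ℝ^m`. -/
def IsHarm {m : ℕ} (u : (Fin m → ℝ) → ℝ) : Prop :=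
  ContDiff ℝ 2 u ∧ ∀ x, ∑ j, pd j (pd j u) x = 0

open Finset

theorem sum_sum_mul_eq_zero_of_antisymm_of_symm {ι R : Type*} [Fintype ι]
    [NonUnitalNonAssocRing R] [IsAddTorsionFree R] (a b : ι → ι → R)
    (ha : ∀ j k, a j k = -a k j) (hb : ∀ j k, b j k = b k j) :
    ∑ j, ∑ k, a j k * b j k = 0 := by
  refine self_eq_neg.1 ?_
  calc ∑ j, ∑ k, a j k * b j k = ∑ j, ∑ k, a k j * b k j := sum_comm
    _ = -∑ j, ∑ k, a j k * b j k := by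
      simp only [← sum_neg_distrib, ← neg_mul, ← ha, hb]

section PartialDerivatives

variable {m : ℕ} {E : Type*} [NormedAddCommGroup E] [NormedSpace ℝ E]

theorem ContDiff.pd {f : (Fin m → ℝ) → E} {k n : WithTop ℕ∞} (hf : ContDiff ℝ n f)
    (hkn : k + 1 ≤ n) (j : Fin m) : ContDiff ℝ k (pd j f) :=
  ((ContinuousLinearMap.apply ℝ E (Pi.single j 1)).contDiff.comp (hf.fderiv_right hkn) :)

theorem pd_neg (f : (Fin m → ℝ) → E) (j : Fin m) (x : Fin m → ℝ) :
    pd j (fun y => -f y) x = -pd j f x := by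
  simp only [pd, fderiv_fun_neg, neg_apply]

theorem pd_mul {f g : (Fin m → ℝ) → ℝ} {x : Fin m → ℝ} (hf : DifferentiableAt ℝ f x)
    (hg : DifferentiableAt ℝ g x) (j : Fin m) :
    pd j (fun y => f y * g y) x = pd j f x * g x + f x * pd j g x := by
  simp only [pd, fderiv_fun_mul hf hg, add_apply, smul_apply, smul_eq_mul]
  ring

theorem pd_comm {f : (Fin m → ℝ) → E} (hf : ContDiff ℝ 2 f) (j k : Fin m) (x : Fin m → ℝ) :
    pd j (pd k f) x = pd k (pd j f) x := by
  have hf' : Differentiable ℝ (fderiv ℝ f) := (hf.fderiv_right le_rfl).differentiable one_ne_zero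
  have hsecond : ∀ v w : Fin m → ℝ,
      fderiv ℝ (fun y => fderiv ℝ f y v) x w = fderiv ℝ (fderiv ℝ f) x w v := fun v w => by
    simp [fderiv_clm_apply (hf' x) (differentiableAt_const v)]
  unfold pd
  rw [hsecond, hsecond]
  exact hf.contDiffAt.isSymmSndFDerivAt (by simp) _ _

end PartialDerivatives

section IntegrationByParts

variable {m : ℕ} {μ : Measure (Fin m → ℝ)} [μ.IsAddHaarMeasure]

theorem integrable_pd_mul {f g : (Fin m → ℝ) → ℝ} (hf : ContDiff ℝ 1 f)
    (hfs : HasCompactSupport f) (hg : Continuous g) (j : Fin m) :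
    Integrable (fun x => pd j f x * g x) μ :=
  ((hf.pd (zero_add _).le j).continuous.mul hg).integrable_of_hasCompactSupport
    ((hfs.fderiv_apply ℝ (Pi.single j 1)).mul_right)

theorem integral_mul_pd_eq_neg_integral_pd_mul {f g : (Fin m → ℝ) → ℝ} (hf : ContDiff ℝ 1 f)
    (hfs : HasCompactSupport f) (hg : ContDiff ℝ 1 g) (j : Fin m) :
    ∫ x, f x * pd j g x ∂μ = -∫ x, pd j f x * g x ∂μ :=
  integral_mul_fderiv_eq_neg_fderiv_mul_of_integrable (integrable_pd_mul hf hfs hg.continuous j)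
    ((hf.continuous.mul (hg.pd (zero_add _).le j).continuous).integrable_of_hasCompactSupport
      hfs.mul_right)
    ((hf.continuous.mul hg.continuous).integrable_of_hasCompactSupport hfs.mul_right)
    (fun x _ => hf.differentiable one_ne_zero x) (fun x _ => hg.differentiable one_ne_zero x)

end IntegrationByParts

section AntisymmetricDivergenceFree

variable {m : ℕ} {a : (Fin m → ℝ) → Fin m → Fin m → ℝ}

theorem sum_pd_row_eq_zero (hanti : ∀ x j k, a x j k = -a x k j)
    (hdiv : ∀ k x, ∑ j, pd j (fun y => a y j k) x = 0) (j : Fin m) (x : Fin m → ℝ) :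
    ∑ k, pd k (fun y => a y j k) x = 0 := by
  simp only [hanti _ j, pd_neg, sum_neg_distrib, hdiv j x, neg_zero]

theorem sum_sum_pd_mul_pd_eq_zero (ha : Differentiable ℝ a) (hanti : ∀ x j k, a x j k = -a x k j)
    (hdiv : ∀ k x, ∑ j, pd j (fun y => a y j k) x = 0) {u : (Fin m → ℝ) → ℝ}
    (hu : ContDiff ℝ 2 u) (x : Fin m → ℝ) :
    ∑ j, ∑ k, pd k (fun y => a y j k * pd j u y) x = 0 := by
  have haC : ∀ j k, DifferentiableAt ℝ (fun y => a y j k) x := fun j k =>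
    differentiableAt_pi.1 (differentiableAt_pi.1 (ha x) j) k
  have hdu : ∀ j, DifferentiableAt ℝ (pd j u) x := fun j =>
    (hu.pd (by norm_num) j).differentiable one_ne_zero x
  have hhess : ∑ j, ∑ k, a x j k * pd k (pd j u) x = 0 :=
    sum_sum_mul_eq_zero_of_antisymm_of_symm _ _ (hanti x) (fun j k => pd_comm hu k j x)
  calc ∑ j, ∑ k, pd k (fun y => a y j k * pd j u y) x
      = ∑ j, (∑ k, pd k (fun y => a y j k) x) * pd j u x +
          ∑ j, ∑ k, a x j k * pd k (pd j u) x := by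
        simp only [pd_mul (haC _ _) (hdu _), sum_add_distrib, sum_mul]
    _ = 0 := by simp only [sum_pd_row_eq_zero hanti hdiv, zero_mul, sum_const_zero, hhess,
        add_zero]

end AntisymmetricDivergenceFree

theorem stmt10_general (n : ℕ)
    (a : (Fin (n + 1) → ℝ) → Fin (n + 1) → Fin (n + 1) → ℝ)
    (ha : ContDiff ℝ 1 a) (has : HasCompactSupport a)
    (hanti : ∀ x j k, a x j k = -a x k j)
    (hdiv : ∀ k x, ∑ j, pd j (fun y => a y j k) x = 0) :
    ∀ u₁ u₂ : (Fin (n + 1) → ℝ) → ℝ, IsHarm u₁ → IsHarm u₂ →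
      ∑ j, ∑ k, ∫ x, a x j k * pd j u₁ x * pd k u₂ x = 0 := by
  rintro u₁ u₂ ⟨hu₁, -⟩ ⟨hu₂, -⟩
  have hu₂' : ContDiff ℝ 1 u₂ := hu₂.of_le (by norm_num)
  set b : Fin (n + 1) → Fin (n + 1) → (Fin (n + 1) → ℝ) → ℝ :=
    fun j k y => a y j k * pd j u₁ y
  have hb : ∀ j k, ContDiff ℝ 1 (b j k) := fun j k =>
    (contDiff_pi.1 (contDiff_pi.1 ha j) k).mul (hu₁.pd (by norm_num) j)
  have hbs : ∀ j k, HasCompactSupport (b j k) := fun j k =>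
    (has.comp_left (g := fun M : _ → _ → ℝ => M j k) rfl).mul_right
  have hint : ∀ j k, Integrable fun x => pd k (b j k) x * u₂ x := fun j k =>
    integrable_pd_mul (hb j k) (hbs j k) hu₂'.continuous k
  calc ∑ j, ∑ k, ∫ x, a x j k * pd j u₁ x * pd k u₂ x
      = ∑ j, ∑ k, -∫ x, pd k (b j k) x * u₂ x := by
        refine sum_congr rfl fun j _ => sum_congr rfl fun k _ => ?_
        rw [← integral_mul_pd_eq_neg_integral_pd_mul (hb j k) (hbs j k) hu₂']
    _ = -∫ x, (∑ j, ∑ k, pd k (b j k) x) * u₂ x := by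
        simp only [sum_mul]
        rw [integral_finsetSum _ fun j _ => integrable_finsetSum _ fun k _ => hint j k]
        simp only [integral_finsetSum _ fun k _ => hint _ k, sum_neg_distrib]
    _ = 0 := by
        simp only [b, sum_sum_pd_mul_pd_eq_zero (ha.differentiable one_ne_zero) hanti hdiv hu₁,
          zero_mul, integral_zero, neg_zero]

theorem stmt10 (n : ℕ) (Ω : Set (Fin (n + 1) → ℝ)) (hΩo : IsOpen Ω)
    (hΩb : Bornology.IsBounded Ω)
    (a : (Fin (n + 1) → ℝ) → Fin (n + 1) → Fin (n + 1) → ℝ)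
    (ha : ContDiff ℝ 1 a) (has : HasCompactSupport a)
    (hanti : ∀ x j k, a x j k = -a x k j)
    (hdiv : ∀ k x, ∑ j, pd j (fun y => a y j k) x = 0) :
    ∀ u₁ u₂ : (Fin (n + 1) → ℝ) → ℝ, IsHarm u₁ → IsHarm u₂ →
      ∑ j, ∑ k, ∫ x, a x j k * pd j u₁ x * pd k u₂ x = 0 :=
  stmt10_general n a ha has hanti hdiv
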